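/- arXiv:2111.05532 — 3 statements merged into one kernel-verified Lean document; each statement's English description precedes it below -/
import Mathlib

section
/- Let X = ∏_{α∈A} X_α be a product of nonempty compact metric spaces, P ⊆ X a closed subset, and f : P → P a homeomorphism. Then for every α ∈ A and every countable set C ⊆ A there exists a countable f-admissible set B ⊆ A containing {α} ∪ C. -/
/-!
A continuous map from the compact set `P` into a metrizable space is uniformly continuous for
the product uniformity, and every entourage of the product uniformity is controlled by finitely
many coordinates; running through a countable basis of the target's uniformity, the map factors
through the projection to countably many coordinates. Enlarging `{α} ∪ C` countably often so
that the coordinates of the previous stage under `f` and `f⁻¹` are determined by the current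
stage yields a countable `B` such that `π_B ∘ f` and `π_B ∘ f⁻¹` factor through `π_B`. As `P` is
compact, `π_B : P → P_B` is a quotient map, so both descend to mutually inverse continuous maps
of `P_B`.
-/

universe u

open Set

/-- The projection of the product `∀ i, X i` onto the partial product indexed by `B`. -/
def proj {I : Type u} {X : I → Type u} (B : Set I) (x : ∀ i, X i) : ∀ b : B, X b :=
  fun b => x b

/-- A set `B ⊆ I` is `f`-admissible for a homeomorphism `f : P ≃ₜ P` of a closed subset `P`
of the product `∀ i, X i` if there is a homeomorphism `f_B` of `P_B = π_B(P)` with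
`π_B ∘ f = f_B ∘ π_B` on `P`. -/
def IsAdmissible {I : Type u} {X : I → Type u} [∀ i, TopologicalSpace (X i)]
    (P : Set (∀ i, X i)) (f : P ≃ₜ P) (B : Set I) : Prop :=
  ∃ fB : (proj B '' P : Set (∀ b : B, X b)) ≃ₜ (proj B '' P : Set (∀ b : B, X b)),
    ∀ p : P, (fB ⟨proj B p.1, ⟨p.1, p.2, rfl⟩⟩).1 = proj B (f p).1

open Filter Topology Uniformity Function

theorem Topology.IsQuotientMap.exists_homeomorph_semiconj {X Y : Type*} [TopologicalSpace X]
    [TopologicalSpace Y] {e : C(X, Y)} (he : IsQuotientMap e) (f : X ≃ₜ X)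
    (hf : FactorsThrough (e ∘ f) e) (hf' : FactorsThrough (e ∘ f.symm) e) :
    ∃ g : Y ≃ₜ Y, ∀ x, g (e x) = e (f x) := by
  let F := he.lift (e.comp f) hf
  let G := he.lift (e.comp f.symm) hf'
  have hF (x : X) : F (e x) = e (f x) := DFunLike.congr_fun (he.lift_comp (e.comp f) hf) x
  have hG (x : X) : G (e x) = e (f.symm x) :=
    DFunLike.congr_fun (he.lift_comp (e.comp f.symm) hf') x
  refine ⟨⟨⟨F, G, fun y => ?_, fun y => ?_⟩, F.continuous, G.continuous⟩, hF⟩ <;>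
    obtain ⟨x, rfl⟩ := he.surjective y
  · simp only [hF, hG, Homeomorph.symm_apply_apply]
  · simp only [hF, hG, Homeomorph.apply_symm_apply]

section

variable {I : Type u} {X : I → Type u}

theorem proj_eq_proj_of_subset {B D : Set I} (hBD : B ⊆ D) {x y : ∀ i, X i}
    (h : proj D x = proj D y) : proj B x = proj B y :=
  funext fun b => congr_fun h ⟨b, hBD b.2⟩

theorem continuous_proj [∀ i, TopologicalSpace (X i)] (B : Set I) :
    Continuous (proj (X := X) B) :=
  continuous_pi fun b => continuous_apply b.1

theorem exists_finset_proj_eq_imp_mem [∀ i, UniformSpace (X i)]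
    {V : Set ((∀ i, X i) × (∀ i, X i))} (hV : V ∈ 𝓤 (∀ i, X i)) :
    ∃ s : Finset I, ∀ x y, proj ↑s x = proj ↑s y → (x, y) ∈ V := by
  obtain ⟨t, ht, W, hW, rfl⟩ := mem_iInf.mp (Pi.uniformity X ▸ hV)
  refine ⟨ht.toFinset, fun x y hxy => mem_iInter.mpr fun i => ?_⟩
  obtain ⟨U, hU, hUW⟩ := hW i
  apply hUW
  have : x i = y i := congr_fun hxy ⟨i, ht.mem_toFinset.mpr i.2⟩
  simpa [this] using refl_mem_uniformity hU

theorem exists_countable_factorsThrough_proj [∀ i, UniformSpace (X i)] {P : Set (∀ i, X i)}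
    (hP : IsCompact P) {M : Type*} [UniformSpace M] [T0Space M] [(𝓤 M).IsCountablyGenerated]
    {g : P → M} (hg : Continuous g) :
    ∃ D : Set I, D.Countable ∧ FactorsThrough g (fun p : P => proj D p.1) := by
  have : CompactSpace P := isCompact_iff_compactSpace.mp hP
  obtain ⟨V, hV⟩ := (𝓤 M).exists_antitone_basis
  have hgV (n : ℕ) :
      ∃ s : Finset I, ∀ p q : P, proj ↑s p.1 = proj ↑s q.1 → (g p, g q) ∈ V n := by
    have hgn := CompactSpace.uniformContinuous_of_continuous hg (hV.mem n)
    rw [uniformity_subtype, mem_map, mem_comap] at hgn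
    obtain ⟨W, hW, hWV⟩ := hgn
    obtain ⟨s, hs⟩ := exists_finset_proj_eq_imp_mem hW
    exact ⟨s, fun p q h => @hWV (p, q) (hs p q h)⟩
  choose s hs using hgV
  refine ⟨⋃ n, ↑(s n), countable_iUnion fun n => (s n).countable_toSet, fun p q h => ?_⟩
  exact eq_of_uniformity_basis hV.toHasBasis fun {n} _ =>
    hs n p q (proj_eq_proj_of_subset (subset_iUnion (fun n => (s n : Set I)) n) h)

theorem exists_countable_superset_factorsThrough_proj [∀ i, UniformSpace (X i)]
    [∀ i, T0Space (X i)] [∀ i, (𝓤 (X i)).IsCountablyGenerated] {P : Set (∀ i, X i)}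
    (hP : IsCompact P) {κ : Type*} [Countable κ] (g : κ → P → P) (hg : ∀ k, Continuous (g k))
    {C : Set I} (hC : C.Countable) :
    ∃ B : Set I, B.Countable ∧ C ⊆ B ∧
      ∀ k, FactorsThrough (fun p => proj B (g k p).1) (fun p : P => proj B p.1) := by
  have step (B : {B : Set I // B.Countable}) : ∃ D : {D : Set I // D.Countable},
      ∀ k, FactorsThrough (fun p => proj B.1 (g k p).1) (fun p : P => proj D.1 p.1) := by
    have : Countable B.1 := B.2.to_subtype
    choose D hD hgD using fun k => exists_countable_factorsThrough_proj hP
      ((continuous_proj B.1).comp (continuous_subtype_val.comp (hg k)))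
    exact ⟨⟨⋃ k, D k, countable_iUnion hD⟩,
      fun k p q h => hgD k (proj_eq_proj_of_subset (subset_iUnion D k) h)⟩
  choose next hnext using step
  let seq (n : ℕ) : {B : Set I // B.Countable} := next^[n] ⟨C, hC⟩
  have hseq_succ (n : ℕ) : seq (n + 1) = next (seq n) := iterate_succ_apply' next n _
  refine ⟨⋃ n, (seq n).1, countable_iUnion fun n => (seq n).2,
    subset_iUnion (fun n => (seq n).1) 0, fun k p q h => funext fun ⟨i, hi⟩ => ?_⟩
  obtain ⟨n, hn⟩ := mem_iUnion.mp hi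
  have hpq : proj (next (seq n)).1 p.1 = proj (next (seq n)).1 q.1 :=
    proj_eq_proj_of_subset (hseq_succ n ▸ subset_iUnion (fun n => (seq n).1) (n + 1)) h
  exact congr_fun (hnext (seq n) k hpq) ⟨i, hn⟩

theorem isAdmissible_of_factorsThrough [∀ i, TopologicalSpace (X i)] [∀ i, T2Space (X i)]
    {P : Set (∀ i, X i)} (hP : IsCompact P) (f : P ≃ₜ P) {B : Set I}
    (hf : FactorsThrough (fun p => proj B (f p).1) (fun p : P => proj B p.1))
    (hf' : FactorsThrough (fun p => proj B (f.symm p).1) (fun p : P => proj B p.1)) :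
    IsAdmissible P f B := by
  have : CompactSpace P := isCompact_iff_compactSpace.mp hP
  let e : C(P, proj B '' P) := ⟨fun p => ⟨proj B p.1, p.1, p.2, rfl⟩,
    ((continuous_proj B).comp continuous_subtype_val).subtype_mk _⟩
  have he_surj : Surjective e := by
    rintro ⟨_, x, hx, rfl⟩
    exact ⟨⟨x, hx⟩, rfl⟩
  have he : IsQuotientMap e := e.continuous.isClosedMap.isQuotientMap e.continuous he_surj
  obtain ⟨g, hg⟩ := he.exists_homeomorph_semiconj f
    (fun p q h => Subtype.ext (hf (congr_arg Subtype.val h)))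
    (fun p q h => Subtype.ext (hf' (congr_arg Subtype.val h)))
  exact ⟨g, fun p => congr_arg Subtype.val (hg p)⟩

end

theorem stmt2_general {I : Type u} {X : I → Type u} [∀ i, MetricSpace (X i)]
    [∀ i, CompactSpace (X i)]
    (P : Set (∀ i, X i)) (hP : IsClosed P) (f : P ≃ₜ P)
    (α : I) (C : Set I) (hC : C.Countable) :
    ∃ B : Set I, B.Countable ∧ insert α C ⊆ B ∧ IsAdmissible P f B := by
  obtain ⟨B, hB, hCB, hfB⟩ := exists_countable_superset_factorsThrough_proj hP.isCompact
    ![⇑f, ⇑f.symm] (Fin.forall_fin_two.2 ⟨f.continuous, f.symm.continuous⟩) (hC.insert α)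
  exact ⟨B, hB, hCB, isAdmissible_of_factorsThrough hP.isCompact f (hfB 0) (hfB 1)⟩

/-- For a product of nonempty compact metric spaces, a closed `P` and a homeomorphism
`f : P → P`, every point `α` and every countable `C ⊆ I` are contained in a countable
`f`-admissible set. -/
theorem stmt2 {I : Type u} {X : I → Type u} [∀ i, MetricSpace (X i)]
    [∀ i, CompactSpace (X i)] [∀ i, Nonempty (X i)]
    (P : Set (∀ i, X i)) (hP : IsClosed P) (f : P ≃ₜ P)
    (α : I) (C : Set I) (hC : C.Countable) :
    ∃ B : Set I, B.Countable ∧ insert α C ⊆ B ∧ IsAdmissible P f B :=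
  stmt2_general P hP f α C hC
end

section
/- Let X = ∏_{α∈A} X_α be a product of nonempty compact metric spaces with A uncountable, and let K ⊆ H(X) be a Lindelöf subset of the group H(X) of self-homeomorphisms of X with the compact-open topology. Then for every countable set B ⊆ A there is a countable set Γ(B) ⊆ A containing B such that for every f ∈ K there exist continuous maps f_{Γ(B)}, g_{Γ(B)} : X_{Γ(B)} → X_B with π_B ∘ f = f_{Γ(B)} ∘ π_{Γ(B)} and π_B ∘ f^{-1} = g_{Γ(B)} ∘ π_{Γ(B)}. -/
/-!
A continuous map from a compact product into a metric space is, up to `ε`, determined by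
finitely many coordinates (uniform continuity). Covering a Lindelöf set of such maps by
`1/(n+1)`-balls and keeping countably many centres for each `n`, the union of their finite
coordinate sets is a countable `Γ` on which every map of the set depends. Inversion is
continuous on `H(Y)` for compact `Y`, so this applies to `K ∪ K⁻¹` composed with each
coordinate projection `π_b`, `b ∈ B`; a map depending only on `Γ` factors continuously
through `π_Γ` via the section that fills the coordinates outside `Γ` with a fixed point.
-/

universe u

open Set

/-- A self-homeomorphism viewed as an element of `C(Z, Z)`; the group `H(Z)` of
self-homeomorphisms with the compact-open topology is the range of this map with the
subspace topology. -/
def toCM {Z : Type u} [TopologicalSpace Z] (h : Z ≃ₜ Z) : C(Z, Z) :=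
  ⟨⇑h, h.continuous⟩

open Filter Topology Uniformity Metric

section Coordinates

variable {I : Type*} {X : I → Type*} [∀ i, UniformSpace (X i)] [CompactSpace (∀ i, X i)]

theorem Continuous.exists_finset_dist_lt {M : Type*} [PseudoMetricSpace M]
    {φ : (∀ i, X i) → M} (hφ : Continuous φ) {ε : ℝ} (hε : 0 < ε) :
    ∃ F : Finset I, ∀ x y : ∀ i, X i, (∀ i ∈ F, x i = y i) → dist (φ x) (φ y) < ε := by
  have hU : {p | dist (φ p.1) (φ p.2) < ε} ∈ 𝓤 (∀ i, X i) :=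
    CompactSpace.uniformContinuous_of_continuous hφ (dist_mem_uniformity hε)
  rw [Pi.uniformity, mem_iInf] at hU
  obtain ⟨S, hS, V, hV, hUV⟩ := hU
  refine ⟨hS.toFinset, fun x y hxy => ?_⟩
  have hxyV : (x, y) ∈ ⋂ i, V i := by
    refine mem_iInter.2 fun i => ?_
    obtain ⟨t, ht, htV⟩ := mem_comap.1 (hV i)
    apply htV
    simp only [mem_preimage, hxy i (hS.mem_toFinset.2 i.2)]
    exact refl_mem_uniformity ht
  rwa [← hUV] at hxyV

theorem IsLindelof.exists_countable_forall_dependsOn {M : Type*} [MetricSpace M]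
    {S : Set C((∀ i, X i), M)} (hS : IsLindelof S) :
    ∃ Γ : Set I, Γ.Countable ∧ ∀ φ ∈ S, DependsOn φ Γ := by
  have hpos : ∀ n : ℕ, (0 : ℝ) < 1 / (n + 1) := fun n => Nat.one_div_pos_of_nat
  choose F hF using fun (φ : C((∀ i, X i), M)) (n : ℕ) =>
    φ.continuous.exists_finset_dist_lt (hpos n)
  choose T _ hTc hST using fun n : ℕ =>
    hS.elim_countable_subcover_image (c := fun φ => ball φ (1 / (n + 1)))
      (fun _ _ => isOpen_ball) fun ψ hψ => mem_biUnion hψ (mem_ball_self (hpos n))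
  refine ⟨⋃ n, ⋃ φ ∈ T n, (F φ n : Set I),
    countable_iUnion fun n => (hTc n).biUnion fun φ _ => (F φ n).countable_toSet,
    fun ψ hψ x y hxy => eq_of_forall_dist_le fun ε hε => ?_⟩
  obtain ⟨n, hn⟩ := exists_nat_one_div_lt (div_pos hε three_pos)
  obtain ⟨φ, hφT, hψφ⟩ := mem_iUnion₂.1 (hST n hψ)
  have hφ : dist (φ x) (φ y) < 1 / (n + 1) :=
    hF φ n x y fun i hi => hxy i (mem_iUnion.2 ⟨n, mem_biUnion hφT hi⟩)
  have hψφ' : ∀ z, dist (ψ z) (φ z) < 1 / (n + 1) := fun z =>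
    (ContinuousMap.dist_apply_le_dist z).trans_lt hψφ
  calc dist (ψ x) (ψ y) ≤ dist (ψ x) (φ x) + dist (φ x) (φ y) + dist (φ y) (ψ y) :=
        dist_triangle4 _ _ _ _
    _ ≤ ε := by
        rw [dist_comm (φ y)]
        linarith [hψφ' x, hψφ' y]

end Coordinates

theorem DependsOn.exists_continuous_comp_proj {I : Type u} {X : I → Type u}
    [∀ i, TopologicalSpace (X i)] [∀ i, Nonempty (X i)] {Z : Type*} [TopologicalSpace Z]
    {φ : (∀ i, X i) → Z} {Γ : Set I} (hφ : DependsOn φ Γ) (hcont : Continuous φ) :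
    ∃ ψ : (∀ i : Γ, X i) → Z, Continuous ψ ∧ ∀ x, φ x = ψ (proj Γ x) := by
  classical
  obtain ⟨x₀⟩ := (inferInstance : Nonempty (∀ i, X i))
  let s : (∀ i : Γ, X i) → ∀ i, X i := fun z i => if h : i ∈ Γ then z ⟨i, h⟩ else x₀ i
  have hs : Continuous s := by
    refine continuous_pi fun i => ?_
    by_cases h : i ∈ Γ
    · simpa [s, h] using continuous_apply (⟨i, h⟩ : Γ)
    · simpa [s, h] using continuous_const
  exact ⟨φ ∘ s, hcont.comp hs, fun x => hφ fun i hi => by simp [s, hi, proj]⟩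

@[simp]
theorem toCM_apply {Z : Type u} [TopologicalSpace Z] (h : Z ≃ₜ Z) (z : Z) : toCM h z = h z :=
  rfl

section Inverse

variable {Y : Type u} [UniformSpace Y] [CompactSpace Y]

theorem tendsto_toCM_symm (f : Y ≃ₜ Y) :
    Tendsto (fun g : Y ≃ₜ Y => toCM g.symm) (comap toCM (𝓝 (toCM f))) (𝓝 (toCM f.symm)) := by
  have hg : TendstoUniformly (fun (g : Y ≃ₜ Y) z => g z) f (comap toCM (𝓝 (toCM f))) :=
    ContinuousMap.tendsto_iff_tendstoUniformly.1 tendsto_comap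
  rw [ContinuousMap.tendsto_iff_tendstoUniformly]
  intro V hV
  -- `f (g⁻¹ z)` is close to `g (g⁻¹ z) = z`, and `f⁻¹` is uniformly continuous.
  have hW : {p : Y × Y | (f.symm p.2, f.symm p.1) ∈ V} ∈ 𝓤 Y :=
    tendsto_swap_uniformity (CompactSpace.uniformContinuous_of_continuous f.symm.continuous hV)
  filter_upwards [hg _ hW] with g hgW z
  simpa using hgW (g.symm z)

theorem IsLindelof.image_toCM_symm {K : Set (Y ≃ₜ Y)} (hK : IsLindelof (toCM '' K)) :
    IsLindelof (toCM '' (Homeomorph.symm '' K)) := by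
  let _ : TopologicalSpace (Y ≃ₜ Y) := .induced toCM inferInstance
  have hind : Topology.IsInducing (toCM : (Y ≃ₜ Y) → C(Y, Y)) := ⟨rfl⟩
  have hsymm : Continuous (Homeomorph.symm : (Y ≃ₜ Y) → (Y ≃ₜ Y)) :=
    hind.continuous_iff.2 <| continuous_iff_continuousAt.2 fun f => by
      simpa [ContinuousAt, nhds_induced, Function.comp_def] using tendsto_toCM_symm f
  exact hind.isLindelof_iff.1 ((hind.isLindelof_iff.2 hK).image hsymm)

end Inverse

theorem stmt8_general {I : Type u} {X : I → Type u} [∀ i, MetricSpace (X i)]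
    [∀ i, CompactSpace (X i)] [∀ i, Nonempty (X i)]
    (K : Set ((∀ i, X i) ≃ₜ (∀ i, X i))) (hK : IsLindelof (toCM '' K))
    (B : Set I) (hB : B.Countable) :
    ∃ Γ : Set I, Γ.Countable ∧ B ⊆ Γ ∧
      ∀ f ∈ K, ∃ fΓ gΓ : (∀ g : Γ, X g) → (∀ b : B, X b),
        Continuous fΓ ∧ Continuous gΓ ∧
        (∀ x : ∀ i, X i, proj B (f x) = fΓ (proj Γ x)) ∧
        (∀ x : ∀ i, X i, proj B (f.symm x) = gΓ (proj Γ x)) := by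
  set L := K ∪ Homeomorph.symm '' K
  have hL : IsLindelof (toCM '' L) := by
    rw [image_union]
    exact hK.union hK.image_toCM_symm
  choose Γ' hΓ'c hΓ' using fun b : I =>
    (hL.image (ContinuousMap.continuous_postcomp ⟨fun x => x b, continuous_apply b⟩)
      ).exists_countable_forall_dependsOn
  set Γ := B ∪ ⋃ b ∈ B, Γ' b
  have hfactor : ∀ f ∈ L, ∃ fΓ : (∀ g : Γ, X g) → (∀ b : B, X b),
      Continuous fΓ ∧ ∀ x, proj B (f x) = fΓ (proj Γ x) := by
    intro f hf
    refine DependsOn.exists_continuous_comp_proj (fun x y hxy => funext fun b => ?_)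
      (continuous_pi fun b => (continuous_apply _).comp f.continuous)
    exact hΓ' b _ (mem_image_of_mem _ (mem_image_of_mem _ hf))
      fun i hi => hxy i (Or.inr (mem_biUnion b.2 hi))
  refine ⟨Γ, hB.union (hB.biUnion fun b _ => hΓ'c b), subset_union_left, fun f hf => ?_⟩
  obtain ⟨fΓ, hfΓ, hfΓf⟩ := hfactor f (Or.inl hf)
  obtain ⟨gΓ, hgΓ, hgΓf⟩ := hfactor f.symm (Or.inr (mem_image_of_mem _ hf))
  exact ⟨fΓ, gΓ, hfΓ, hgΓ, hfΓf, hgΓf⟩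

/-- Claim 3.2 of the paper: for every countable `B ⊆ I` there is a countable `Γ(B) ⊇ B`
such that for every `f` in the Lindelöf set `K ⊆ H(X)`, both `π_B ∘ f` and `π_B ∘ f⁻¹`
factor continuously through `π_{Γ(B)}`. -/
theorem stmt8 {I : Type u} {X : I → Type u} [∀ i, MetricSpace (X i)]
    [∀ i, CompactSpace (X i)] [∀ i, Nonempty (X i)] [Uncountable I]
    (K : Set ((∀ i, X i) ≃ₜ (∀ i, X i))) (hK : IsLindelof (toCM '' K))
    (B : Set I) (hB : B.Countable) :
    ∃ Γ : Set I, Γ.Countable ∧ B ⊆ Γ ∧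
      ∀ f ∈ K, ∃ fΓ gΓ : (∀ g : Γ, X g) → (∀ b : B, X b),
        Continuous fΓ ∧ Continuous gΓ ∧
        (∀ x : ∀ i, X i, proj B (f x) = fΓ (proj Γ x)) ∧
        (∀ x : ∀ i, X i, proj B (f.symm x) = gΓ (proj Γ x)) :=
  stmt8_general K hK B hB
end

section
/- Let X = ∏_{n∈ℕ} X_n be a countable product of nonempty compact metric spaces. Then the group H(X) of self-homeomorphisms of X with the compact-open topology is an absolute extensor for zero-dimensional compact spaces: for every zero-dimensional compact Hausdorff space Y, every closed subset P ⊆ Y, and every continuous map g : P → H(X), there is a continuous map G : Y → H(X) with G|_P = g. -/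
/-!
The product `Z = ∏ Xₙ` is a compact metrizable space. For compact metric `Z`, the map
`h ↦ (h, h⁻¹)` identifies `H(Z)` with the closed set of pairs `(f, g)` in `C(Z, Z)²`
with `f ∘ g = g ∘ f = id` (inversion is continuous by uniform continuity of `h⁻¹`), which is
complete for the sup metric. So it suffices that every continuous map `u` from a closed subset
`P` of a compact zero-dimensional space `Y` into a complete metric space `M` extends to `Y`.
If `v : Y → M` is `ε`-close to `u` on `P`, cover `P` by finitely many clopen sets on which `u`
varies by less than `δ` and `v` stays `ε`-close to the value of `u` at the centre; redefining
`v` to be that value on each of them makes it `δ`-close to `u` on `P` while moving it by less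
than `ε`. Iterating with `ε = ε₀ / 2ⁿ` gives a uniformly Cauchy sequence whose limit
extends `u`.
-/

universe u v

open Set

open Filter Topology TopologicalSpace

section ZeroDimensionalExtension

variable {Y M : Type*} [TopologicalSpace Y]

lemma ContinuousMap.exists_update_on_clopens [TopologicalSpace M] {ι : Type*} (s : Finset ι)
    {U : ι → Set Y} (hU : ∀ i, IsClopen (U i)) (c : ι → M) (v : C(Y, M)) :
    ∃ w : C(Y, M), ∀ y,
      (∃ i ∈ s, y ∈ U i ∧ w y = c i) ∨ ((∀ i ∈ s, y ∉ U i) ∧ w y = v y) := by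
  classical
  induction s using Finset.induction_on with
  | empty => exact ⟨v, fun y => Or.inr ⟨by simp, rfl⟩⟩
  | insert a s _ ih =>
    obtain ⟨w, hw⟩ := ih
    refine ⟨⟨(U a).piecewise (fun _ => c a) w,
      continuous_const.piecewise (by simp [(hU a).frontier_eq]) w.continuous⟩, fun y => ?_⟩
    by_cases hya : y ∈ U a
    · exact Or.inl ⟨a, Finset.mem_insert_self a s, hya, by simp [hya]⟩
    · rcases hw y with ⟨i, hi, hyi, hwy⟩ | ⟨hys, hwy⟩
      · exact Or.inl ⟨i, Finset.mem_insert_of_mem hi, hyi, by simp [hya, hwy]⟩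
      · exact Or.inr ⟨(Finset.forall_mem_insert _ _ _).2 ⟨hya, hys⟩, by simp [hya, hwy]⟩

variable [MetricSpace M] [CompactSpace Y] {P : Set Y}

lemma exists_continuousMap_dist_lt_of_clopen_basis
    (hY : IsTopologicalBasis {s : Set Y | IsClopen s}) (hP : IsClosed P) {u : P → M}
    (hu : Continuous u) (v : C(Y, M)) {ε δ : ℝ} (hε : 0 < ε) (hδ : 0 < δ)
    (hv : ∀ p : P, dist (v p) (u p) < ε) :
    ∃ w : C(Y, M), (∀ p : P, dist (w p) (u p) < δ) ∧ dist w v < ε := by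
  have hnear : ∀ p : P, ∀ᶠ y in 𝓝 (p : Y),
      (∀ q : P, (q : Y) = y → dist (u q) (u p) < δ) ∧ dist (u p) (v y) < ε := by
    intro p
    refine Eventually.and ?_ ?_
    · have := hu.continuousAt.eventually (Metric.ball_mem_nhds (u p) hδ)
      rwa [nhds_subtype, eventually_comap] at this
    · exact (continuous_const.dist v.continuous).continuousAt.eventually
        (gt_mem_nhds (by simpa only [dist_comm] using hv p))
  choose U hU hpU hUnear using fun p => hY.mem_nhds_iff.1 (hnear p)
  obtain ⟨s, hs⟩ := hP.isCompact.elim_finite_subcover U (fun p => (hU p).isOpen)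
    fun y hy => mem_iUnion.2 ⟨⟨y, hy⟩, hpU _⟩
  obtain ⟨w, hw⟩ := ContinuousMap.exists_update_on_clopens s hU u v
  refine ⟨w, fun q => ?_, (ContinuousMap.dist_lt_iff hε).2 fun y => ?_⟩
  · obtain ⟨p, hp, hqp⟩ := mem_iUnion₂.1 (hs q.2)
    rcases hw q with ⟨p', -, hqp', hwq⟩ | ⟨hq, -⟩
    · rw [hwq, dist_comm]
      exact (hUnear p' hqp').1 q rfl
    · exact absurd hqp (hq p hp)
  · rcases hw y with ⟨p, -, hyp, hwy⟩ | ⟨-, hwy⟩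
    · rw [hwy]
      exact (hUnear p hyp).2
    · rwa [hwy, dist_self]

theorem exists_continuousMap_extension_of_clopen_basis [CompleteSpace M] [Nonempty M]
    (hY : IsTopologicalBasis {s : Set Y | IsClopen s}) (hP : IsClosed P) {u : P → M}
    (hu : Continuous u) : ∃ G : C(Y, M), ∀ p : P, G p = u p := by
  have : CompactSpace P := isCompact_iff_compactSpace.mp hP.isCompact
  let b : M := Classical.arbitrary M
  obtain ⟨ε₀, hε₀, hball⟩ := (isCompact_range hu).isBounded.subset_ball_lt 0 b
  let ε : ℕ → ℝ := fun n => ε₀ / 2 ^ n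
  have hε : ∀ n, 0 < ε n := fun n => by positivity
  have step : ∀ n (v : C(Y, M)), (∀ p : P, dist (v p) (u p) < ε n) →
      ∃ w : C(Y, M), (∀ p : P, dist (w p) (u p) < ε (n + 1)) ∧ dist w v < ε n :=
    fun n v hv => exists_continuousMap_dist_lt_of_clopen_basis hY hP hu v (hε n) (hε (n + 1)) hv
  choose! next hnext_near hnext_dist using step
  let w : ℕ → C(Y, M) := fun n => Nat.rec (ContinuousMap.const Y b) next n
  have hw_near : ∀ n, ∀ p : P, dist (w n p) (u p) < ε n := by
    intro n
    induction n with
    | zero => simpa [ε, w, dist_comm] using fun p => hball (mem_range_self p)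
    | succ n ih => exact hnext_near n (w n) ih
  have hw_cauchy : CauchySeq w := by
    refine cauchySeq_of_le_geometric_two (C := 2 * ε₀) fun n => ?_
    rw [dist_comm, mul_div_cancel_left₀ _ two_ne_zero]
    exact (hnext_dist n (w n) (hw_near n)).le
  obtain ⟨G, hG⟩ := cauchySeq_tendsto_of_complete hw_cauchy
  have hε_lim : Tendsto ε atTop (𝓝 0) :=
    tendsto_const_nhds.div_atTop (tendsto_pow_atTop_atTop_of_one_lt one_lt_two)
  refine ⟨G, fun p =>
    tendsto_nhds_unique (((continuous_eval_const (p : Y)).tendsto G).comp hG) ?_⟩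
  rw [tendsto_iff_dist_tendsto_zero]
  exact squeeze_zero (fun n => dist_nonneg) (fun n => (hw_near n p).le) hε_lim

end ZeroDimensionalExtension

def homeomorphPairs (Z : Type u) [TopologicalSpace Z] : Set (C(Z, Z) × C(Z, Z)) :=
  {q | q.1.comp q.2 = ContinuousMap.id Z ∧ q.2.comp q.1 = ContinuousMap.id Z}

section HomeomorphPairs

variable {Z : Type u} [TopologicalSpace Z]

lemma isClosed_homeomorphPairs [LocallyCompactSpace Z] [T2Space Z] :
    IsClosed (homeomorphPairs Z) :=
  (isClosed_singleton.preimage (ContinuousMap.continuous_comp'.comp continuous_swap)).inter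
    (isClosed_singleton.preimage ContinuousMap.continuous_comp')

lemma toCM_prod_symm_mem_homeomorphPairs (h : Z ≃ₜ Z) :
    (toCM h, toCM h.symm) ∈ homeomorphPairs Z :=
  ⟨by ext; simp [toCM], by ext; simp [toCM]⟩

lemma fst_mem_range_toCM {q : C(Z, Z) × C(Z, Z)} (hq : q ∈ homeomorphPairs Z) :
    q.1 ∈ range (toCM (Z := Z)) :=
  ⟨{ toFun := q.1, invFun := q.2
     left_inv := fun x => DFunLike.congr_fun hq.2 x
     right_inv := fun x => DFunLike.congr_fun hq.1 x
     continuous_toFun := q.1.continuous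
     continuous_invFun := q.2.continuous }, rfl⟩

end HomeomorphPairs

lemma Continuous.toCM_symm {Z : Type u} [MetricSpace Z] [CompactSpace Z] {T : Type*}
    [TopologicalSpace T] {F : T → Z ≃ₜ Z} (hF : Continuous fun t => toCM (F t)) :
    Continuous fun t => toCM (F t).symm := by
  refine continuous_iff_continuousAt.2 fun t₀ => Metric.tendsto_nhds.2 fun ε hε => ?_
  obtain ⟨δ, hδ, hsymm⟩ := Metric.uniformContinuous_iff.1
    (CompactSpace.uniformContinuous_of_continuous (F t₀).symm.continuous) ε hε
  filter_upwards [Metric.tendsto_nhds.1 hF.continuousAt δ hδ] with t ht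
  refine (ContinuousMap.dist_lt_iff hε).2 fun x => ?_
  -- `F t₀` moves `y = (F t)⁻¹ x` to within `δ` of `F t y = x`; now apply `(F t₀)⁻¹`.
  have hclose : dist (F t₀ ((F t).symm x)) x < δ := by
    calc dist (F t₀ ((F t).symm x)) x
        = dist (toCM (F t) ((F t).symm x)) (toCM (F t₀) ((F t).symm x)) := by
          simp [toCM, dist_comm]
      _ ≤ dist (toCM (F t)) (toCM (F t₀)) := ContinuousMap.dist_apply_le_dist _
      _ < δ := ht
  simpa [toCM] using hsymm hclose

theorem exists_continuous_extension_range_toCM {Z : Type u} [MetricSpace Z] [CompactSpace Z]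
    {Y : Type v} [TopologicalSpace Y] [CompactSpace Y]
    (hY : IsTopologicalBasis {s : Set Y | IsClopen s}) {P : Set Y} (hP : IsClosed P)
    {g : P → range (toCM (Z := Z))} (hg : Continuous g) :
    ∃ G : Y → range (toCM (Z := Z)), Continuous G ∧ ∀ p : P, G p = g p := by
  choose F hF using fun p => (g p).2
  have hF_cont : Continuous fun p => toCM (F p) :=
    (continuous_subtype_val.comp hg).congr fun p => (hF p).symm
  have : CompleteSpace (homeomorphPairs Z) := isClosed_homeomorphPairs.completeSpace_coe
  have : Nonempty (homeomorphPairs Z) :=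
    ⟨⟨_, toCM_prod_symm_mem_homeomorphPairs (Homeomorph.refl Z)⟩⟩
  obtain ⟨G, hG⟩ := exists_continuousMap_extension_of_clopen_basis hY hP
    (M := homeomorphPairs Z)
    (u := fun p => ⟨_, toCM_prod_symm_mem_homeomorphPairs (F p)⟩)
    ((hF_cont.prodMk hF_cont.toCM_symm).subtype_mk _)
  refine ⟨fun y => ⟨_, fst_mem_range_toCM (G y).2⟩,
    (continuous_fst.comp (continuous_subtype_val.comp G.continuous)).subtype_mk _,
    fun p => Subtype.ext ?_⟩
  simp [hG p, hF]

theorem stmt11_general {X : ℕ → Type u} [∀ n, MetricSpace (X n)]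
    [∀ n, CompactSpace (X n)]
    (Y : Type v) [TopologicalSpace Y] [CompactSpace Y]
    (hY : TopologicalSpace.IsTopologicalBasis {s : Set Y | IsClopen s})
    (P : Set Y) (hP : IsClosed P)
    (g : P → ↥(Set.range (toCM (Z := ∀ n, X n)))) (hg : Continuous g) :
    ∃ G : Y → ↥(Set.range (toCM (Z := ∀ n, X n))), Continuous G ∧ ∀ p : P, G ↑p = g p := by
  let : MetricSpace (∀ n, X n) := TopologicalSpace.metrizableSpaceMetric _
  exact exists_continuous_extension_range_toCM hY hP hg

/-- For a countable product `X = ∏_{n ∈ ℕ} X_n` of nonempty compact metric spaces,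
the homeomorphism group `H(X)` with the compact-open topology is an absolute extensor for
zero-dimensional compact Hausdorff spaces. -/
theorem stmt11 {X : ℕ → Type u} [∀ n, MetricSpace (X n)]
    [∀ n, CompactSpace (X n)] [∀ n, Nonempty (X n)]
    (Y : Type v) [TopologicalSpace Y] [CompactSpace Y] [T2Space Y]
    (hY : TopologicalSpace.IsTopologicalBasis {s : Set Y | IsClopen s})
    (P : Set Y) (hP : IsClosed P)
    (g : P → ↥(Set.range (toCM (Z := ∀ n, X n)))) (hg : Continuous g) :
    ∃ G : Y → ↥(Set.range (toCM (Z := ∀ n, X n))), Continuous G ∧ ∀ p : P, G ↑p = g p :=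
  stmt11_general Y hY P hP g hg
end
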